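/- arXiv:math/0404370 — 2 statements merged into one kernel-verified Lean document; each statement's English description precedes it below -/
import Mathlib

section
/- Let M be a loopless matroid on a finite ground set E, let ω ∈ ℝ^E, let B be an ω-minimum basis of M, and let e ∈ E \ B. Let C_0 be the fundamental circuit of B and e, i.e., the unique circuit of M contained in B ∪ {e}. Then the subdominant M-ultrametric satisfies ω^M_e = max_{f ∈ C_0 \ {e}} ω_f. -/
/-! Upper bound: `usub` is an `M`-ultrametric, so `e` lies in a `usub`-minimum basis `B'`, and
exchanging `e` against some `f ∈ C₀ \ B'` gives `usub e ≤ usub f ≤ ω f`. Lower bound: the function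
equal to `ω` on `B` and to the maximum of `ω` over `C(x, B) \ {x}` at `x ∉ B` (with `C(x, B)` the
fundamental circuit) is an `M`-ultrametric below `ω`: `B` is minimum for it by the
fundamental-circuit optimality criterion, and exchanging `x ∉ B` against the maximiser in
`C(x, B)` keeps the weight, so every element lies in a minimum basis. -/

open scoped Classical

variable {α : Type*}

/-- The ω-weight of a set of elements: the sum of ω over the set. -/
noncomputable def wSum (ω : α → ℝ) (B : Set α) : ℝ := ∑ᶠ e ∈ B, ω e

/-- `B` is an ω-minimum basis of `M`: a basis whose ω-weight is minimum among all bases. -/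
def IsMinBase [Fintype α] (M : Matroid α) (ω : α → ℝ) (B : Set α) : Prop :=
  M.IsBase B ∧ ∀ B' : Set α, M.IsBase B' → wSum ω B ≤ wSum ω B'

/-- `ω` lies in the Bergman fan of `M`: every element lies in some ω-minimum basis. -/
def InBergmanFan [Fintype α] (M : Matroid α) (ω : α → ℝ) : Prop :=
  ∀ e : α, ∃ B : Set α, IsMinBase M ω B ∧ e ∈ B

/-- `C` is a circuit of `M`: a minimal dependent set. -/
def IsCircuit (M : Matroid α) (C : Set α) : Prop := Minimal M.Dep C

/-- A cocircuit of `M` is a circuit of the dual matroid `M✶`. -/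
def IsCocircuit (M : Matroid α) (C : Set α) : Prop := IsCircuit M✶ C

open Set

lemma wSum_insert_sdiff_singleton {ω : α → ℝ} {B : Set α} {x f : α} (hB : B.Finite)
    (hx : x ∈ B) (hf : f ∉ B) :
    wSum ω (insert f (B \ {x})) = wSum ω B - ω x + ω f := by
  have hB' : wSum ω B = ω x + wSum ω (B \ {x}) := by
    conv_lhs => rw [← insert_eq_of_mem hx, ← insert_sdiff_singleton]
    exact finsum_mem_insert ω (fun h => h.2 rfl) hB.sdiff
  rw [wSum, finsum_mem_insert ω (fun h => hf h.1) hB.sdiff, ← wSum, hB']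
  ring

namespace Matroid

variable {M : Matroid α} {B C : Set α} {x f : α}

lemma IsBase.exists_exchange_of_mem_isCircuit (hB : M.IsBase B) (hxB : x ∈ B)
    (hC : M.IsCircuit C) (hxC : x ∈ C) : ∃ f ∈ C \ B, M.IsBase (insert f (B \ {x})) := by
  have hx : x ∉ M.closure (B \ {x}) := hB.indep.notMem_closure_sdiff_of_mem hxB
  obtain ⟨f, hfC, hf⟩ : ∃ f ∈ C \ {x}, f ∉ M.closure (B \ {x}) := by
    by_contra! h
    exact hx (M.closure_subset_closure_of_subset_closure h
      (hC.mem_closure_sdiff_singleton_of_mem hxC))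
  have hfB : f ∉ B := fun hfB =>
    hf (M.mem_closure_of_mem ⟨hfB, hfC.2⟩ (sdiff_subset.trans hB.subset_ground))
  exact ⟨f, ⟨hfC.1, hfB⟩, hB.exchange_base_of_notMem_closure hxB hf (hC.subset_ground hfC.1)⟩

lemma IsBase.isBase_insert_sdiff_of_mem_fundCircuit (hB : M.IsBase B) (hxE : x ∈ M.E)
    (hxB : x ∉ B) (hf : f ∈ M.fundCircuit x B ∩ B) : M.IsBase (insert x (B \ {f})) := by
  have hfx : f ≠ x := ne_of_mem_of_not_mem hf.2 hxB
  rw [insert_sdiff_singleton_comm hfx.symm]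
  exact hB.exchange_isBase_of_indep' hf.2 hxB <|
    (hB.indep.mem_fundCircuit_iff (by rwa [hB.closure_eq]) hxB).1 hf.1

lemma IsBase.fundCircuit_inter_nonempty (hB : M.IsBase B) (hx : M.IsNonloop x) :
    (M.fundCircuit x B ∩ B).Nonempty := by
  by_cases hxB : x ∈ B
  · exact ⟨x, M.mem_fundCircuit x B, hxB⟩
  rw [← fundCircuit_sdiff_eq_inter M hxB, nonempty_iff_ne_empty, Ne, sdiff_eq_empty]
  exact fun h => (hB.fundCircuit_isCircuit hx.mem_ground hxB).not_indep
    ((indep_singleton.2 hx).subset h)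

/-- For `x ∉ B` this is the maximum of `ω` over `M.fundCircuit x B \ {x}`; for `x ∈ B` the
fundamental circuit has the junk value `{x}`, so it is `ω x`. -/
noncomputable def fundCircuitSup (M : Matroid α) (ω : α → ℝ) (B : Set α) (x : α) : ℝ :=
  sSup (ω '' (M.fundCircuit x B ∩ B))

lemma fundCircuitSup_of_mem {ω : α → ℝ} (hx : x ∈ B) : M.fundCircuitSup ω B x = ω x := by
  simp [fundCircuitSup, fundCircuit_eq_of_mem hx, hx]

lemma le_fundCircuitSup [Finite α] {ω : α → ℝ} (hf : f ∈ M.fundCircuit x B ∩ B) :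
    ω f ≤ M.fundCircuitSup ω B x :=
  le_csSup (toFinite _).bddAbove (mem_image_of_mem ω hf)

lemma IsBase.exists_eq_fundCircuitSup [Finite α] (hB : M.IsBase B) (hx : M.IsNonloop x)
    (ω : α → ℝ) : ∃ f ∈ M.fundCircuit x B ∩ B, ω f = M.fundCircuitSup ω B x :=
  ((hB.fundCircuit_inter_nonempty hx).image ω).csSup_mem (toFinite _)

end Matroid

section Weighted

variable [Fintype α] {M : Matroid α} {ω : α → ℝ} {B : Set α} {x f : α}

lemma IsMinBase.le_of_isBase_exchange (hB : IsMinBase M ω B) (hx : x ∈ B) (hf : f ∉ B)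
    (hB' : M.IsBase (insert f (B \ {x}))) : ω x ≤ ω f := by
  have := hB.2 _ hB'
  rw [wSum_insert_sdiff_singleton B.toFinite hx hf] at this
  linarith

lemma IsMinBase.le_of_mem_fundCircuit (hB : IsMinBase M ω B) (hxE : x ∈ M.E) (hxB : x ∉ B)
    (hf : f ∈ M.fundCircuit x B ∩ B) : ω f ≤ ω x :=
  hB.le_of_isBase_exchange hf.2 hxB (hB.1.isBase_insert_sdiff_of_mem_fundCircuit hxE hxB hf)

lemma InBergmanFan.exists_le_of_mem_isCircuit (hω : InBergmanFan M ω) {C : Set α}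
    (hC : M.IsCircuit C) (hxC : x ∈ C) : ∃ f ∈ C \ {x}, ω x ≤ ω f := by
  obtain ⟨B, hB, hxB⟩ := hω x
  obtain ⟨f, hf, hB'⟩ := hB.1.exists_exchange_of_mem_isCircuit hxB hC hxC
  exact ⟨f, ⟨hf.1, ne_of_mem_of_not_mem hxB hf.2 |>.symm⟩, hB.le_of_isBase_exchange hxB hf.2 hB'⟩

lemma Matroid.IsBase.isMinBase_of_forall_fundCircuit (hB : M.IsBase B)
    (h : ∀ x ∉ B, ∀ f ∈ M.fundCircuit x B ∩ B, ω f ≤ ω x) : IsMinBase M ω B := by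
  refine ⟨hB, fun B' hB' => ?_⟩
  -- Exchanging `x ∈ B' \ B` along its fundamental circuit in `B` brings `B'` one step closer to `B`
  -- without increasing its weight.
  induction hn : (B' \ B).ncard using Nat.strong_induction_on generalizing B' with
  | _ n ih =>
    obtain hB'B | ⟨x, hx⟩ := (B' \ B).eq_empty_or_nonempty
    · rw [hB'.eq_of_subset_isBase hB (sdiff_eq_empty.1 hB'B)]
    obtain ⟨f, hf, hB''⟩ := hB'.exists_exchange_of_mem_isCircuit hx.1
      (hB.fundCircuit_isCircuit (hB'.subset_ground hx.1) hx.2) (M.mem_fundCircuit x B)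
    have hfB : f ∈ B :=
      (M.fundCircuit_subset_insert x B hf.1).resolve_left (ne_of_mem_of_not_mem hx.1 hf.2).symm
    have hlt : (insert f (B' \ {x}) \ B).ncard < n := by
      rw [← hn, insert_sdiff_of_mem _ hfB, sdiff_right_comm]
      exact ncard_sdiff_singleton_lt_of_mem hx
    have := ih _ hlt _ hB'' rfl
    rw [wSum_insert_sdiff_singleton B'.toFinite hx.1 hf.2] at this
    linarith [h x hx.2 f ⟨hf.1, hfB⟩]

lemma IsMinBase.fundCircuitSup_le (hB : IsMinBase M ω B) (hx : M.IsNonloop x) :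
    M.fundCircuitSup ω B x ≤ ω x := by
  by_cases hxB : x ∈ B
  · exact (Matroid.fundCircuitSup_of_mem hxB).le
  obtain ⟨f, hf, hfx⟩ := hB.1.exists_eq_fundCircuitSup hx ω
  exact hfx ▸ hB.le_of_mem_fundCircuit hx.mem_ground hxB hf

lemma Matroid.IsBase.isMinBase_fundCircuitSup (hB : M.IsBase B) :
    IsMinBase M (M.fundCircuitSup ω B) B :=
  hB.isMinBase_of_forall_fundCircuit fun _ _ f hf => by
    rw [fundCircuitSup_of_mem hf.2]
    exact le_fundCircuitSup hf

lemma Matroid.IsBase.inBergmanFan_fundCircuitSup (hB : M.IsBase B) (hM : ∀ x, M.IsNonloop x) :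
    InBergmanFan M (M.fundCircuitSup ω B) := by
  intro x
  by_cases hxB : x ∈ B
  · exact ⟨B, hB.isMinBase_fundCircuitSup, hxB⟩
  obtain ⟨f, hf, hfx⟩ := hB.exists_eq_fundCircuitSup (hM x) ω
  refine ⟨insert x (B \ {f}), ⟨hB.isBase_insert_sdiff_of_mem_fundCircuit (hM x).mem_ground hxB hf,
    fun B' hB' => ?_⟩, mem_insert x _⟩
  rw [wSum_insert_sdiff_singleton B.toFinite hf.2 hxB, fundCircuitSup_of_mem hf.2, hfx,
    sub_add_cancel]
  exact hB.isMinBase_fundCircuitSup.2 B' hB'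

end Weighted

theorem stmt8_general [Fintype α] (M : Matroid α)
    (hloopless : ∀ e : α, M.Indep {e}) (ω usub : α → ℝ)
    (h1 : InBergmanFan M usub) (h2 : ∀ e, usub e ≤ ω e)
    (h3 : ∀ u : α → ℝ, InBergmanFan M u → (∀ e, u e ≤ ω e) → ∀ e, u e ≤ usub e)
    (B : Set α) (hB : IsMinBase M ω B) (e : α) (he : e ∉ B)
    (C₀ : Set α) (hC₀ : IsCircuit M C₀) (heC₀ : e ∈ C₀) (hC₀B : C₀ ⊆ insert e B) :
    usub e = sSup (ω '' (C₀ \ {e})) := by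
  have hnonloop (x : α) : M.IsNonloop x := Matroid.indep_singleton.1 (hloopless x)
  obtain ⟨f, hf, hef⟩ := h1.exists_le_of_mem_isCircuit hC₀ heC₀
  rw [Matroid.IsCircuit.eq_fundCircuit_of_subset hC₀ hB.1.indep hC₀B,
    M.fundCircuit_sdiff_eq_inter he] at hf ⊢
  refine le_antisymm ?_ (h3 _ (hB.1.inBergmanFan_fundCircuitSup hnonloop)
    (fun x => hB.fundCircuitSup_le (hnonloop x)) e)
  calc usub e ≤ usub f := hef
    _ ≤ ω f := h2 f
    _ ≤ M.fundCircuitSup ω B e := Matroid.le_fundCircuitSup hf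

/-- For a loopless matroid M, ω ∈ ℝ^E, an ω-minimum basis B, an element
e ∉ B, and the fundamental circuit C₀ of B and e: the subdominant M-ultrametric satisfies
ω^M_e = max_{f ∈ C₀ \ {e}} ω_f. -/
theorem stmt8 [Fintype α] (M : Matroid α) (hE : M.E = Set.univ)
    (hloopless : ∀ e : α, M.Indep {e}) (ω usub : α → ℝ)
    (h1 : InBergmanFan M usub) (h2 : ∀ e, usub e ≤ ω e)
    (h3 : ∀ u : α → ℝ, InBergmanFan M u → (∀ e, u e ≤ ω e) → ∀ e, u e ≤ usub e)
    (B : Set α) (hB : IsMinBase M ω B) (e : α) (he : e ∉ B)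
    (C₀ : Set α) (hC₀ : IsCircuit M C₀) (heC₀ : e ∈ C₀) (hC₀B : C₀ ⊆ insert e B) :
    usub e = sSup (ω '' (C₀ \ {e})) :=
  stmt8_general M hloopless ω usub h1 h2 h3 B hB e he C₀ hC₀ heC₀ hC₀B
end

section
/- Let M be a matroid on a finite ground set E. The Bergman fan B̃(M) is tropically convex: if u, v ∈ B̃(M) and a, b ∈ ℝ, then the vector w ∈ ℝ^E defined by w_e = max(u_e + a, v_e + b) also lies in B̃(M). (Equivalently, the reflected set −B̃(M) is closed under the min-plus tropical combinations (a ⊙ x) ⊕ (b ⊙ y).) -/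
open scoped Classical

variable {α : Type*}

/-!
An element `e` lies in some ω-minimum basis if and only if it is not spanned by the elements
that are strictly ω-cheaper than `e`: a cheaper element outside the span of `B - e` could replace
`e` in a minimum basis `B`, and conversely the fundamental circuit of `e` with respect to a minimum
basis contains an element at least as expensive as `e`, which `e` may replace. Since
`max (u + a) (v + b)` agrees at `e` with `u + a` (say) and dominates it everywhere, every element
cheaper than `e` for the maximum is cheaper than `e` for `u`, so the criterion passes from `u`
to the maximum by monotonicity of the closure.
-/

lemma wSum_insert_sdiff_singleton_add {ω : α → ℝ} {B : Set α} (hB : B.Finite) {e f : α}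
    (he : e ∈ B) (hf : f ∉ B) :
    wSum ω (insert f (B \ {e})) + ω e = wSum ω B + ω f := by
  unfold wSum
  conv_rhs => rw [← Set.insert_eq_of_mem he, ← Set.insert_sdiff_singleton]
  rw [finsum_mem_insert ω (fun h => hf h.1) hB.sdiff,
    finsum_mem_insert ω (a := e) (s := B \ {e}) (by simp) hB.sdiff]
  ring

lemma exists_isMinBase [Fintype α] (M : Matroid α) (ω : α → ℝ) :
    ∃ B, IsMinBase M ω B := by
  obtain ⟨B, hB, hmin⟩ :=
    Set.exists_min_image {B | M.IsBase B} (wSum ω) (Set.toFinite _) M.exists_isBase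
  exact ⟨B, hB, hmin⟩

lemma IsMinBase.notMem_closure_setOf_lt [Fintype α] {M : Matroid α} {ω : α → ℝ} {B : Set α}
    (hB : IsMinBase M ω B) {e : α} (heB : e ∈ B) : e ∉ M.closure {f | ω f < ω e} := by
  intro he
  obtain ⟨f, ⟨hfe : ω f < ω e, hfE⟩, hf⟩ :
      ∃ f ∈ {f | ω f < ω e} ∩ M.E, f ∉ M.closure (B \ {e}) := by
    by_contra! hcon
    refine hB.1.indep.notMem_closure_sdiff_of_mem heB ?_
    rw [← M.closure_inter_ground] at he
    exact M.closure_subset_closure_of_subset_closure hcon he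
  have hfB : f ∉ B := fun h =>
    hf (M.mem_closure_of_mem' ⟨h, by rintro rfl; exact lt_irrefl _ hfe⟩ hfE)
  have hexch := wSum_insert_sdiff_singleton_add (ω := ω) (Set.toFinite B) heB hfB
  have := hB.2 _ (hB.1.exchange_base_of_notMem_closure heB hf hfE)
  linarith

lemma IsMinBase.exists_isMinBase_mem [Fintype α] {M : Matroid α} {ω : α → ℝ} {B : Set α}
    (hB : IsMinBase M ω B) {e : α} (heE : e ∈ M.E) (he : e ∉ M.closure {f | ω f < ω e}) :
    ∃ B', IsMinBase M ω B' ∧ e ∈ B' := by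
  by_cases heB : e ∈ B
  · exact ⟨B, hB, heB⟩
  have hC := hB.1.fundCircuit_isCircuit heE heB
  obtain ⟨f, ⟨hfC, hfe⟩, hef⟩ : ∃ f ∈ M.fundCircuit e B \ {e}, ω e ≤ ω f := by
    by_contra! hcon
    exact he (M.closure_subset_closure hcon
      (hC.mem_closure_sdiff_singleton_of_mem (M.mem_fundCircuit e B)))
  have hfB : f ∈ B := (M.fundCircuit_subset_insert e B hfC).resolve_left hfe
  have hind := (hB.1.indep.mem_fundCircuit_iff (by rwa [hB.1.closure_eq]) heB).1 hfC
  have hB' := hB.1.exchange_isBase_of_indep' hfB heB hind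
  rw [← Set.insert_sdiff_singleton_comm (Ne.symm hfe)] at hB'
  have hexch := wSum_insert_sdiff_singleton_add (ω := ω) (Set.toFinite B) hfB heB
  exact ⟨_, ⟨hB', fun B₂ h₂ => by linarith [hB.2 B₂ h₂]⟩, Set.mem_insert e _⟩

lemma exists_isMinBase_mem_of_setOf_lt_subset [Fintype α] {M : Matroid α} {ω ω' : α → ℝ}
    {B : Set α} (hB : IsMinBase M ω B) {e : α} (heB : e ∈ B)
    (hlt : {f | ω' f < ω' e} ⊆ {f | ω f < ω e}) :
    ∃ B', IsMinBase M ω' B' ∧ e ∈ B' := by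
  obtain ⟨B', hB'⟩ := exists_isMinBase M ω'
  exact hB'.exists_isMinBase_mem (hB.1.subset_ground heB)
    fun h => hB.notMem_closure_setOf_lt heB (M.closure_subset_closure hlt h)

lemma setOf_max_add_lt_subset (x y : α → ℝ) (a b : ℝ) {e : α} (h : y e + b ≤ x e + a) :
    {f | max (x f + a) (y f + b) < max (x e + a) (y e + b)} ⊆ {f | x f < x e} := by
  intro f (hf : max (x f + a) (y f + b) < _)
  rw [max_eq_left h] at hf
  show x f < x e
  linarith [le_max_left (x f + a) (y f + b)]

theorem stmt10_general [Fintype α] (M : Matroid α) (u v : α → ℝ)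
    (hu : InBergmanFan M u) (hv : InBergmanFan M v) (a b : ℝ) :
    InBergmanFan M (fun e => max (u e + a) (v e + b)) := by
  intro e
  rcases le_total (v e + b) (u e + a) with h | h
  · obtain ⟨B, hB, heB⟩ := hu e
    exact exists_isMinBase_mem_of_setOf_lt_subset hB heB (setOf_max_add_lt_subset u v a b h)
  · obtain ⟨B, hB, heB⟩ := hv e
    simp_rw [max_comm (u _ + a)]
    exact exists_isMinBase_mem_of_setOf_lt_subset hB heB (setOf_max_add_lt_subset v u b a h)

/-- The Bergman fan is tropically convex: if u, v ∈ B̃(M) and a, b ∈ ℝ,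
then the vector e ↦ max (u_e + a) (v_e + b) also lies in B̃(M). -/
theorem stmt10 [Fintype α] (M : Matroid α) (hE : M.E = Set.univ) (u v : α → ℝ)
    (hu : InBergmanFan M u) (hv : InBergmanFan M v) (a b : ℝ) :
    InBergmanFan M (fun e => max (u e + a) (v e + b)) :=
  stmt10_general M u v hu hv a b
end
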